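/- Comma-propagated universal arrows, ascending case: let J be a small category, let G : D ⥤ (J ⥤ C) be a functor, and let (d, g) be a universal arrow from an object c of J ⥤ C to G (i.e., g : c ⟶ G d and the pair is initial among structured arrows from c to G). Then the pair consisting of the object L.obj(𝟙_d) of J ⥤ Arrow C and the morphism L.map(g, g) : L.obj(𝟙_c) ⟶ (Ĝ ⋙ L).obj(𝟙_d) is a universal arrow from L.obj(𝟙_c) to the comma-propagated functor Ĝ ⋙ L : Arrow D ⥤ (J ⥤ Arrow C). -/

import Mathlib

/-!
The modulator `L` is fully faithful (it is even an isomorphism of categories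
`Arrow (J ⥤ C) ≅ J ⥤ Arrow C`), so post-composition with `L` is an equivalence
`StructuredArrow (𝟙 c) Ĝ ≌ StructuredArrow (L (𝟙 c)) (Ĝ ⋙ L)` and preserves initial objects.
It remains to see that `(𝟙 d, (g, g))` is universal for `Ĝ`. A structured arrow from `𝟙 c` to
`Ĝ` is a pair `t₁ : c ⟶ G e₁`, `t₂ : c ⟶ G e₂` with `t₁ ≫ G f = t₂`; factoring through `g`
gives `k₁, k₂`, and `k₁ ≫ f = k₂` because both factor `t₂`.
-/

open CategoryTheory

/-- The modulator functor `L : Arrow (J ⥤ C) ⥤ (J ⥤ Arrow C)`. -/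
def modulatorL (J : Type u₁) [SmallCategory J] (C : Type u₂) [Category.{v₂} C] :
    Arrow (J ⥤ C) ⥤ (J ⥤ Arrow C) where
  obj h :=
    { obj := fun j => Arrow.mk (h.hom.app j)
      map := fun {j j'} u =>
        Arrow.homMk' (u := h.left.map u) (v := h.right.map u) (h.hom.naturality u)
      map_id := by intro j; ext <;> simp
      map_comp := by intro _ _ _ u v; ext <;> simp }
  map {h k} g :=
    { app := fun j =>
        Arrow.homMk' (u := g.left.app j) (v := g.right.app j)
          (by exact NatTrans.congr_app (Arrow.w g) j)
      naturality := by intro j j' u; ext; exacts [g.left.naturality u, g.right.naturality u] }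
  map_id := by intro h; ext j <;> simp
  map_comp := by intro _ _ _ f g; ext j <;> rfl

namespace modulatorL

variable (J : Type u₁) [SmallCategory J] (C : Type u₂) [Category.{v₂} C]

instance : (modulatorL J C).Faithful where
  map_injective {h k} φ ψ e := by
    ext j
    · exact congrArg (fun τ => (τ.app j).left) e
    · exact congrArg (fun τ => (τ.app j).right) e

instance : (modulatorL J C).Full where
  map_surjective {h k} τ :=
    ⟨Arrow.homMk (u := Functor.whiskerRight τ Arrow.leftFunc)
      (v := Functor.whiskerRight τ Arrow.rightFunc) (by ext j; exact Arrow.w (τ.app j)),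
      by ext j <;> rfl⟩

end modulatorL

namespace CategoryTheory.StructuredArrow.IsUniversal

variable {C : Type*} [Category C] {D : Type*} [Category D] {G : D ⥤ C} {c : C} {d : D}
  {g : c ⟶ G.obj d}

theorem eq_desc_of_fac (h : IsUniversal (mk g)) {e : D} {k : d ⟶ e} {t : c ⟶ G.obj e}
    (hk : g ≫ G.map k = t) : k = h.desc (mk t) :=
  hk ▸ h.hom_desc k

theorem desc_comp (h : IsUniversal (mk g)) {e e' : D} (t : c ⟶ G.obj e) (f : e ⟶ e') :
    h.desc (mk t) ≫ f = h.desc (mk (t ≫ G.map f)) :=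
  h.eq_desc_of_fac (by rw [Functor.map_comp, ← Category.assoc]; exact h.fac (mk t) =≫ G.map f)

def mapArrow (h : IsUniversal (mk g)) :
    IsUniversal (mk (Y := Arrow.mk (𝟙 d)) (T := G.mapArrow)
      (Arrow.homMk (f := Arrow.mk (𝟙 c)) (u := g) (v := g) (by simp [Functor.mapArrow]))) := by
  -- `(S := c)`: otherwise the source is `(Arrow.mk (𝟙 c)).left`, which is `c` only up to unfolding
  refine Limits.IsInitial.ofUniqueHom (fun X => homMk (Arrow.homMk
    (h.desc (mk (S := c) (Y := X.right.left) X.hom.left))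
    (h.desc (mk (S := c) (Y := X.right.right) X.hom.right)) ?_) ?_) (fun X m => ?_)
  · have hX : X.hom.left ≫ G.map X.right.hom = X.hom.right :=
      (Arrow.w X.hom).trans (Category.id_comp _)
    exact (h.desc_comp _ _).trans
      ((congrArg (fun t => h.desc (mk t)) hX).trans (Category.id_comp _).symm)
  · ext
    · exact h.fac (mk X.hom.left)
    · exact h.fac (mk X.hom.right)
  · ext
    · exact h.eq_desc_of_fac (congrArg CommaMorphism.left (w m))
    · exact h.eq_desc_of_fac (congrArg CommaMorphism.right (w m))

end CategoryTheory.StructuredArrow.IsUniversal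

/-- Comma-propagated universal arrows (ascending case): if `(d, g)` is a
universal arrow from `c : J ⥤ C` to `G : D ⥤ (J ⥤ C)`, then
`(L.obj (𝟙 d), L.map (g, g))` is a universal arrow from `L.obj (𝟙 c)` to the
comma-propagated functor `Ĝ ⋙ L : Arrow D ⥤ (J ⥤ Arrow C)`. -/
theorem ascending_universal_arrow
    (J : Type u₁) [SmallCategory J] {C : Type u₂} [Category.{v₂} C]
    {D : Type u₃} [Category.{v₃} D]
    (G : D ⥤ (J ⥤ C)) (c : J ⥤ C) (d : D) (g : c ⟶ G.obj d)
    (h : Limits.IsInitial (StructuredArrow.mk g)) :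
    Nonempty (Limits.IsInitial (StructuredArrow.mk
      (T := G.mapArrow ⋙ modulatorL J C) (Y := Arrow.mk (𝟙 d))
      ((modulatorL J C).map
        (Arrow.homMk (f := Arrow.mk (𝟙 c)) (g := G.mapArrow.obj (Arrow.mk (𝟙 d)))
          (u := g) (v := g) (by simp [Functor.mapArrow]))))) :=
  ⟨Limits.IsInitial.isInitialObj (StructuredArrow.post _ _ (modulatorL J C)) _
    (StructuredArrow.IsUniversal.mapArrow h)⟩
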